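/- Let Δ ⊂ ℝⁿ be a compact convex polytope with nonempty interior, and for each v in an index set V with weights n_v > 0 (only finitely many 'active'), let θ_v : Δ → ℝ be continuous concave with θ_v = 0 for all but finitely many v; set θ = Σ_v n_v θ_v. Suppose x_max ∈ Δ maximizes θ and 0 is a vertex (extreme point) of the sup-differential ∂θ(x_max). Then for every maximizer x of θ, 0 is a vertex of ∂θ(x), and the equation 0 = Σ_v n_v a_v with a_v ∈ ∂θ_v(x) has a unique solution (u_v)_v, with each u_v a vertex of ∂θ_v(x). -/

import Mathlib

/-!
At a maximizer `x` of `θ`, `0 ∈ ∂θ(x)`, and all maximizers share the value of `θ`; hence the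
face of `∂θ(x)` exposed by `-⟪·, x_max - x⟫` lies in `∂θ(x_max)` and contains `0`, so `0` stays
a vertex. Separating (Hahn–Banach) the strict hypograph of one concave function from the
epigraph of a convex function above it gives the sum rule `∂(f + g)(x) ⊆ ∂f(x) + ∂g(x)`, which
produces a solution of `0 = Σ n_v a_v`. For any solution, replacing `a_v` by `w ∈ ∂θ_v(x)` gives
`n_v (w - a_v) ∈ ∂θ(x)`: this affine map sends `a_v` to the vertex `0`, so `a_v` is a vertex,
and comparing two solutions through it shows that they agree.
-/

open RealInnerProductSpace

/-- The sup-differential of a concave function `g` at `x` relative to `Δ`. -/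
def supDiff {n : ℕ} (Δ : Set (EuclideanSpace ℝ (Fin n)))
    (g : EuclideanSpace ℝ (Fin n) → ℝ) (x : EuclideanSpace ℝ (Fin n)) :
    Set (EuclideanSpace ℝ (Fin n)) :=
  {u | ∀ z ∈ Δ, g z - g x ≤ ⟪u, z - x⟫}

open Set Function Finset

section Sandwich

variable {E : Type*} [TopologicalSpace E] [AddCommGroup E] [Module ℝ E]
  [IsTopologicalAddGroup E] [ContinuousSMul ℝ E] {s : Set E} {f g : E → ℝ}

theorem ConcaveOn.exists_affine_between_on_interior (hf : ConcaveOn ℝ s f)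
    (hfc : ContinuousOn f (interior s)) (hg : ConvexOn ℝ s g) (hfg : ∀ z ∈ s, f z ≤ g z)
    (hs : (interior s).Nonempty) :
    ∃ (φ : E →L[ℝ] ℝ) (b : ℝ), (∀ z ∈ interior s, f z ≤ φ z + b) ∧ ∀ z ∈ s, φ z + b ≤ g z := by
  obtain ⟨x₀, hx₀⟩ := hs
  let A := {p : E × ℝ | p.1 ∈ interior s ∧ p.2 < f p.1}
  have hA : Convex ℝ A := (hf.subset interior_subset hf.1.interior).convex_strict_hypograph
  have hAopen : IsOpen A := by
    have : ContinuousOn (fun p : E × ℝ => f p.1 - p.2) (interior s ×ˢ univ) :=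
      (hfc.comp continuousOn_fst fun p hp => hp.1).sub continuousOn_snd
    convert this.isOpen_inter_preimage (isOpen_interior.prod isOpen_univ)
      (isOpen_Ioi (a := 0)) using 1
    ext p
    simp [A, sub_pos]
  have hAB : Disjoint A {p : E × ℝ | p.1 ∈ s ∧ g p.1 ≤ p.2} := Set.disjoint_left.2
    fun p hpA hpB => (hpA.2.trans_le ((hfg _ (interior_subset hpA.1)).trans hpB.2)).false
  obtain ⟨φ, c, hφA, hφB⟩ := geometric_hahn_banach_open hA hAopen hg.convex_epigraph hAB
  set ψ := φ.comp (ContinuousLinearMap.inl ℝ E ℝ)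
  set k := φ (0, 1)
  have hφ : ∀ z t, φ (z, t) = ψ z + t * k := fun z t => by
    rw [show (z, t) = (z, 0) + t • ((0 : E), (1 : ℝ)) by simp, map_add, map_smul, smul_eq_mul]
    rfl
  -- the separating hyperplane is not vertical, because it separates two points above `x₀`
  have hk : 0 < k := by
    by_contra! hk
    have hfg₀ := hfg x₀ (interior_subset hx₀)
    have h₁ := hφA (x₀, f x₀ - 1) ⟨hx₀, by simp⟩
    have h₂ := hφB (x₀, g x₀) ⟨interior_subset hx₀, le_rfl⟩
    rw [hφ] at h₁ h₂
    nlinarith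
  have hℓ : ∀ z, (-(k⁻¹ • ψ)) z + c / k = (c - ψ z) / k := fun z => by
    change -(k⁻¹ * ψ z) + c / k = _
    field_simp
    ring
  refine ⟨-(k⁻¹ • ψ), c / k, fun z hz => ?_, fun z hz => ?_⟩
  · rw [hℓ]
    refine le_of_forall_lt fun t ht => ?_
    have h := hφA (z, t) ⟨hz, ht⟩
    rw [hφ] at h
    rw [lt_div_iff₀ hk]
    linarith
  · have h := hφB (z, g z) ⟨hz, le_rfl⟩
    rw [hφ] at h
    rw [hℓ, div_le_iff₀ hk]
    linarith

theorem ConcaveOn.exists_affine_between (hf : ConcaveOn ℝ s f) (hfc : ContinuousOn f s)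
    (hg : ConvexOn ℝ s g) (hfg : ∀ z ∈ s, f z ≤ g z) (hs : (interior s).Nonempty) :
    ∃ (φ : E →L[ℝ] ℝ) (b : ℝ), ∀ z ∈ s, f z ≤ φ z + b ∧ φ z + b ≤ g z := by
  obtain ⟨φ, b, hfφ, hφg⟩ :=
    hf.exists_affine_between_on_interior (hfc.mono interior_subset) hg hfg hs
  refine ⟨φ, b, fun z hz => ⟨?_, hφg z hz⟩⟩
  have hz' : z ∈ closure (interior s) := by
    rw [hf.1.closure_interior_eq_closure_of_nonempty_interior hs]
    exact subset_closure hz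
  exact ContinuousWithinAt.closure_le hz' ((hfc z hz).mono interior_subset)
    (φ.continuous.add continuous_const).continuousWithinAt hfφ

end Sandwich

section SupDiff

open scoped Pointwise

variable {n : ℕ} {Δ : Set (EuclideanSpace ℝ (Fin n))} {f g : EuclideanSpace ℝ (Fin n) → ℝ}
  {x : EuclideanSpace ℝ (Fin n)}

theorem supDiff_congr (h : EqOn f g Δ) (hx : x ∈ Δ) : supDiff Δ f x = supDiff Δ g x := by
  ext u
  exact forall₂_congr fun z hz => by rw [h hz, h hx]

theorem supDiff_smul {c : ℝ} (hc : 0 < c) : supDiff Δ (c • f) x = c • supDiff Δ f x := by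
  ext u
  rw [Set.mem_smul_set_iff_inv_smul_mem₀ hc.ne']
  refine forall₂_congr fun z _ => ?_
  rw [Pi.smul_apply, Pi.smul_apply, smul_eq_mul, smul_eq_mul, ← mul_sub, real_inner_smul_left,
    le_inv_mul_iff₀ hc]

theorem supDiff_add_subset (hf : ConcaveOn ℝ Δ f) (hfc : ContinuousOn f Δ) (hg : ConcaveOn ℝ Δ g)
    (hΔ : (interior Δ).Nonempty) (hx : x ∈ Δ) :
    supDiff Δ (f + g) x ⊆ supDiff Δ f x + supDiff Δ g x := by
  intro u hu
  -- an affine function squeezed between `f - ⟪u, ·⟫` and `(f + g) x - ⟪u, x⟫ - g` splits `u`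
  obtain ⟨φ, b, hφ⟩ := (hf.sub ((innerₛₗ ℝ u).convexOn hf.1)).exists_affine_between
    (hfc.sub (continuous_const.inner continuous_id).continuousOn)
    (hg.neg.add_const (f x + g x - ⟪u, x⟫)) (fun z hz => by
      have := hu z hz
      simp only [Pi.add_apply, Pi.sub_apply, Pi.neg_apply, innerₛₗ_apply_apply,
        inner_sub_right] at this ⊢
      linarith) hΔ
  set w := (InnerProductSpace.toDual ℝ _).symm φ
  have hw : ∀ z, φ z = ⟪w, z⟫ := fun z => (InnerProductSpace.toDual_symm_apply).symm
  have hb : b = f x - ⟪u, x⟫ - ⟪w, x⟫ := by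
    have := hφ x hx
    simp only [Pi.sub_apply, innerₛₗ_apply_apply, Pi.neg_apply, Pi.add_apply, hw] at this
    linarith
  refine ⟨u + w, fun z hz => ?_, -w, fun z hz => ?_, add_neg_cancel_right u w⟩ <;>
  · have := hφ z hz
    simp only [Pi.sub_apply, innerₛₗ_apply_apply, Pi.neg_apply, Pi.add_apply, hw, hb] at this
    simp only [inner_add_left, inner_neg_left, inner_sub_right]
    linarith

theorem supDiff_finset_sum_subset {ι : Type*} {s : Finset ι}
    {f : ι → EuclideanSpace ℝ (Fin n) → ℝ} (hs : s.Nonempty)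
    (hf : ∀ i ∈ s, ConcaveOn ℝ Δ (f i)) (hfc : ∀ i ∈ s, ContinuousOn (f i) Δ)
    (hΔ : (interior Δ).Nonempty) (hx : x ∈ Δ) :
    supDiff Δ (∑ i ∈ s, f i) x ⊆ ∑ i ∈ s, supDiff Δ (f i) x := by
  induction hs using Finset.Nonempty.cons_induction with
  | singleton i => simp
  | cons i s hi hs ih =>
    have hfi := hf i (mem_cons_self i s)
    have hsum : ConcaveOn ℝ Δ (∑ j ∈ s, f j) := Finset.sum_induction _ (ConcaveOn ℝ Δ)
      (fun _ _ => ConcaveOn.add) (concaveOn_const 0 hfi.1) fun j hj => hf j (mem_cons_of_mem hj)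
    rw [sum_cons, sum_cons]
    exact (supDiff_add_subset hfi (hfc i (mem_cons_self i s)) hsum hΔ hx).trans
      (Set.add_subset_add_left (ih (fun j hj => hf j (mem_cons_of_mem hj))
        fun j hj => hfc j (mem_cons_of_mem hj)))

end SupDiff

theorem Function.HasFiniteSupport.update {α M : Type*} [Zero M] [DecidableEq α] {a : α → M}
    (ha : HasFiniteSupport a) (v : α) (w : M) : HasFiniteSupport (update a v w) := by
  classical
  rw [HasFiniteSupport, support_update_eq_ite]
  split_ifs
  exacts [ha.sdiff, ha.insert v]

theorem finsum_smul_update_sub {α R M : Type*} [Ring R] [AddCommGroup M] [Module R M]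
    [DecidableEq α] (c : α → R) {a : α → M} (ha : HasFiniteSupport a) (v : α) (w : M) :
    ∑ᶠ i, c i • update a v w i - ∑ᶠ i, c i • a i = c v • (w - a v) := by
  rw [← finsum_sub_distrib (f := fun i => c i • update a v w i) (g := fun i => c i • a i)
      ((ha.update v w).smul_right c) (ha.smul_right c),
    finsum_eq_single _ v fun i hi => by rw [update_of_ne hi, sub_self], update_self, smul_sub]

section Extreme

variable {E : Type*} [AddCommGroup E] [Module ℝ E] {A B : Set E}

theorem eq_zero_of_zero_mem_extremePoints (hA : 0 ∈ A.extremePoints ℝ) {d : E} (hd : d ∈ A)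
    (hd' : -d ∈ A) : d = 0 :=
  hA.2 hd hd' ⟨1 / 2, 1 / 2, by norm_num, by norm_num, by norm_num, by module⟩

theorem mem_extremePoints_of_forall_smul_sub_mem (hA : 0 ∈ A.extremePoints ℝ) {u : E}
    (hu : u ∈ B) {c : ℝ} (hc : c ≠ 0) (hBA : ∀ w ∈ B, c • (w - u) ∈ A) :
    u ∈ B.extremePoints ℝ := by
  refine ⟨hu, fun p hp q hq ⟨α, β, hα, hβ, hαβ, hpq⟩ => ?_⟩
  obtain rfl : β = 1 - α := by linarith
  have h := hA.2 (hBA p hp) (hBA q hq) ⟨α, 1 - α, hα, hβ, hαβ, by rw [← hpq]; module⟩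
  rwa [smul_eq_zero_iff_right hc, sub_eq_zero] at h

end Extreme

section Family

variable {n : ℕ} {Δ : Set (EuclideanSpace ℝ (Fin n))} {x : EuclideanSpace ℝ (Fin n)}

theorem zero_mem_supDiff_of_isMaxOn {g : EuclideanSpace ℝ (Fin n) → ℝ} (hg : IsMaxOn g Δ x) :
    0 ∈ supDiff Δ g x := fun z hz => by
  rw [inner_zero_left, sub_nonpos]
  exact hg hz

theorem zero_mem_extremePoints_supDiff_of_isMaxOn {g : EuclideanSpace ℝ (Fin n) → ℝ}
    {y : EuclideanSpace ℝ (Fin n)} (hx : x ∈ Δ) (hgx : IsMaxOn g Δ x) (hy : y ∈ Δ)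
    (hgy : IsMaxOn g Δ y) (h : 0 ∈ (supDiff Δ g y).extremePoints ℝ) :
    0 ∈ (supDiff Δ g x).extremePoints ℝ := by
  have hxy : g x = g y := le_antisymm (hgy hx) (hgx hy)
  set F := {p ∈ supDiff Δ g x | ∀ q ∈ supDiff Δ g x, -⟪y - x, q⟫ ≤ -⟪y - x, p⟫}
  have hF : IsExtreme ℝ (supDiff Δ g x) F :=
    IsExposed.isExtreme fun _ => ⟨-innerSL ℝ (y - x), rfl⟩
  have hnonneg : ∀ q ∈ supDiff Δ g x, 0 ≤ ⟪q, y - x⟫ := fun q hq => by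
    simpa [hxy] using hq y hy
  have h0F : 0 ∈ F := ⟨zero_mem_supDiff_of_isMaxOn hgx, fun q hq => by
    simpa [real_inner_comm] using hnonneg q hq⟩
  have hFy : F ⊆ supDiff Δ g y := fun p ⟨hp, hpF⟩ z hz => by
    have h₁ := hp z hz
    have h₂ := hpF 0 (zero_mem_supDiff_of_isMaxOn hgx)
    rw [inner_zero_right, neg_zero, le_neg, neg_zero, real_inner_comm] at h₂
    have h₃ : ⟪p, z - x⟫ = ⟪p, z - y⟫ + ⟪p, y - x⟫ := by
      rw [← inner_add_right, sub_add_sub_cancel]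
    linarith
  exact hF.extremePoints_subset_extremePoints
    (inter_extremePoints_subset_extremePoints_of_subset hFy ⟨h0F, h⟩)

variable {V : Type*} {nv : V → ℝ} {θ : V → EuclideanSpace ℝ (Fin n) → ℝ}

theorem finsum_smul_mem_supDiff (hnv : ∀ v, 0 ≤ nv v)
    (hθ : {v : V | ∃ x ∈ Δ, θ v x ≠ 0}.Finite) (hx : x ∈ Δ) {a : V → EuclideanSpace ℝ (Fin n)}
    (ha : HasFiniteSupport a) (hmem : ∀ v, a v ∈ supDiff Δ (θ v) x) :
    ∑ᶠ v, nv v • a v ∈ supDiff Δ (fun z => ∑ᶠ v, nv v * θ v z) x := by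
  have hfin : ∀ z ∈ Δ, HasFiniteSupport fun v => nv v * θ v z := fun z hz =>
    hθ.subset fun v hv => ⟨z, hz, right_ne_zero_of_mul hv⟩
  intro z hz
  have hinner : HasFiniteSupport fun v => ⟪nv v • a v, z - x⟫ :=
    ha.subset <| support_subset_iff'.2 fun v hv => by
      rw [Function.notMem_support.1 hv, smul_zero, inner_zero_left]
  calc ∑ᶠ v, nv v * θ v z - ∑ᶠ v, nv v * θ v x
      = ∑ᶠ v, (nv v * θ v z - nv v * θ v x) := (finsum_sub_distrib (hfin z hz) (hfin x hx)).symm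
    _ ≤ ∑ᶠ v, ⟪nv v • a v, z - x⟫ :=
        finsum_le_finsum' ((hfin z hz).sub (hfin x hx)) hinner fun v => by
          rw [← mul_sub, real_inner_smul_left]
          exact mul_le_mul_of_nonneg_left (hmem v z hz) (hnv v)
    _ = ⟪∑ᶠ v, nv v • a v, z - x⟫ := by
        simp_rw [real_inner_comm (z - x)]
        exact (map_finsum (innerSL ℝ (z - x)) (ha.smul_right nv)).symm

theorem exists_finsum_smul_eq_of_mem_supDiff [Nonempty V] (hΔ : (interior Δ).Nonempty)
    (hnv : ∀ v, 0 < nv v) (hθconc : ∀ v, ConcaveOn ℝ Δ (θ v))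
    (hθcont : ∀ v, ContinuousOn (θ v) Δ) (hθ : {v : V | ∃ x ∈ Δ, θ v x ≠ 0}.Finite)
    (hx : x ∈ Δ) {u : EuclideanSpace ℝ (Fin n)}
    (hu : u ∈ supDiff Δ (fun z => ∑ᶠ v, nv v * θ v z) x) :
    ∃ a : V → EuclideanSpace ℝ (Fin n), HasFiniteSupport a ∧
      (∀ v, a v ∈ supDiff Δ (θ v) x) ∧ ∑ᶠ v, nv v • a v = u := by
  classical
  obtain ⟨v₀⟩ := ‹Nonempty V›
  obtain ⟨T, hv₀T, hvanish⟩ : ∃ T : Finset V, v₀ ∈ T ∧ ∀ v ∉ T, ∀ z ∈ Δ, θ v z = 0 :=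
    ⟨insert v₀ hθ.toFinset, mem_insert_self _ _, fun v hv z hz => by
      by_contra h
      exact hv (mem_insert_of_mem (hθ.mem_toFinset.2 ⟨z, hz, h⟩))⟩
  have hT : EqOn (fun z => ∑ᶠ v, nv v * θ v z) (∑ v ∈ T, nv v • θ v) Δ := fun z hz => by
    simp only [Finset.sum_apply, Pi.smul_apply, smul_eq_mul]
    exact finsum_eq_sum_of_support_subset _ <|
      support_subset_iff'.2 fun v hv => by rw [hvanish v hv z hz, mul_zero]
  rw [supDiff_congr hT hx] at hu
  obtain ⟨b, hb, rfl⟩ := (Set.mem_finsetSum _ _ _).1 <|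
    supDiff_finset_sum_subset (f := fun v => nv v • θ v) ⟨v₀, hv₀T⟩
      (fun v _ => (hθconc v).smul (hnv v).le) (fun v _ => (hθcont v).const_smul _) hΔ hx hu
  refine ⟨fun v => if v ∈ T then (nv v)⁻¹ • b v else 0, T.finite_toSet.subset ?_,
    fun v => ?_, ?_⟩
  · exact support_subset_iff'.2 fun v hv => if_neg hv
  · dsimp only
    split_ifs with hv
    · rw [← Set.mem_smul_set_iff_inv_smul_mem₀ (hnv v).ne', ← supDiff_smul (hnv v)]
      exact hb hv
    · intro z hz
      simp [hvanish v hv z hz, hvanish v hv x hx]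
  · rw [finsum_eq_sum_of_support_subset _ (s := T)]
    · exact Finset.sum_congr rfl fun v hv => by simp [hv, smul_inv_smul₀ (hnv v).ne']
    · exact support_subset_iff'.2 fun v hv => by simp [Finset.mem_coe.not.1 hv]

end Family

theorem stmt17_general {n : ℕ} {V : Type*}
    (Δ : Set (EuclideanSpace ℝ (Fin n)))
    (hΔint : (interior Δ).Nonempty)
    (nv : V → ℝ) (hnv : ∀ v, 0 < nv v)
    (θ : V → EuclideanSpace ℝ (Fin n) → ℝ)
    (hθconc : ∀ v, ConcaveOn ℝ Δ (θ v))
    (hθcont : ∀ v, ContinuousOn (θ v) Δ)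
    (hθfin : {v : V | ∃ x ∈ Δ, θ v x ≠ 0}.Finite)
    (θtot : EuclideanSpace ℝ (Fin n) → ℝ)
    (hθtot : ∀ x, θtot x = ∑ᶠ v, nv v * θ v x)
    (xmax : EuclideanSpace ℝ (Fin n))
    (hxmax : xmax ∈ Δ ∧ ∀ y ∈ Δ, θtot y ≤ θtot xmax)
    (hvert : (0 : EuclideanSpace ℝ (Fin n)) ∈
      Set.extremePoints ℝ (supDiff Δ θtot xmax)) :
    ∀ x, x ∈ Δ → (∀ y ∈ Δ, θtot y ≤ θtot x) →
      ((0 : EuclideanSpace ℝ (Fin n)) ∈ Set.extremePoints ℝ (supDiff Δ θtot x) ∧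
      (∃! a : V → EuclideanSpace ℝ (Fin n),
        (Function.support a).Finite ∧ (∀ v, a v ∈ supDiff Δ (θ v) x) ∧
          ∑ᶠ v, nv v • a v = 0) ∧
      ∀ a : V → EuclideanSpace ℝ (Fin n),
        (Function.support a).Finite → (∀ v, a v ∈ supDiff Δ (θ v) x) →
        ∑ᶠ v, nv v • a v = 0 →
        ∀ v, a v ∈ Set.extremePoints ℝ (supDiff Δ (θ v) x)) := by
  classical
  intro x hx hxθ
  obtain rfl : θtot = fun z => ∑ᶠ v, nv v * θ v z := funext hθtot
  have hext := zero_mem_extremePoints_supDiff_of_isMaxOn hx (isMaxOn_iff.2 hxθ) hxmax.1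
    (isMaxOn_iff.2 hxmax.2) hvert
  have hmove : ∀ a : V → EuclideanSpace ℝ (Fin n), (support a).Finite →
      (∀ v, a v ∈ supDiff Δ (θ v) x) → ∑ᶠ v, nv v • a v = 0 →
      ∀ v, ∀ w ∈ supDiff Δ (θ v) x,
        nv v • (w - a v) ∈ supDiff Δ (fun z => ∑ᶠ v, nv v * θ v z) x := by
    intro a ha hmem hsum v w hw
    rw [← finsum_smul_update_sub nv ha v w, hsum, sub_zero]
    exact finsum_smul_mem_supDiff (fun v => (hnv v).le) hθfin hx (HasFiniteSupport.update ha v w)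
      ((forall_update_iff a fun v u => u ∈ supDiff Δ (θ v) x).2 ⟨hw, fun v _ => hmem v⟩)
  obtain ⟨a₀, ha₀⟩ : ∃ a : V → EuclideanSpace ℝ (Fin n), (support a).Finite ∧
      (∀ v, a v ∈ supDiff Δ (θ v) x) ∧ ∑ᶠ v, nv v • a v = 0 := by
    cases isEmpty_or_nonempty V
    · exact ⟨0, by simp, isEmptyElim, finsum_of_isEmpty _⟩
    · exact exists_finsum_smul_eq_of_mem_supDiff hΔint hnv hθconc hθcont hθfin hx hext.1
  refine ⟨hext, ⟨a₀, ha₀, fun a ha => funext fun v => ?_⟩, fun a ha hmem hsum v =>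
    mem_extremePoints_of_forall_smul_sub_mem hext (hmem v) (hnv v).ne' (hmove a ha hmem hsum v)⟩
  have h := eq_zero_of_zero_mem_extremePoints hext
    (hmove a₀ ha₀.1 ha₀.2.1 ha₀.2.2 v (a v) (ha.2.1 v))
    (by simpa [smul_sub] using hmove a ha.1 ha.2.1 ha.2.2 v (a₀ v) (ha₀.2.1 v))
  rwa [smul_eq_zero_iff_right (hnv v).ne', sub_eq_zero] at h

/-- Let `Δ ⊂ ℝⁿ` be a compact convex polytope with nonempty interior,
`θ_v : Δ → ℝ` continuous concave functions (zero for all but finitely many `v`) with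
weights `n_v > 0`, and `θ = Σ_v n_v θ_v`. If `0` is a vertex of `∂θ(x_max)` at some
maximizer `x_max` of `θ` on `Δ`, then for every maximizer `x` of `θ`: `0` is a vertex
of `∂θ(x)`, the equation `0 = Σ_v n_v a_v` with finitely supported `(a_v)`,
`a_v ∈ ∂θ_v(x)`, has a unique solution, and in any such solution each `a_v` is a
vertex of `∂θ_v(x)`. -/
theorem stmt17 {n : ℕ} {V : Type*}
    (Δ : Set (EuclideanSpace ℝ (Fin n)))
    (hΔcpt : IsCompact Δ) (hΔconv : Convex ℝ Δ) (hΔint : (interior Δ).Nonempty)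
    (nv : V → ℝ) (hnv : ∀ v, 0 < nv v)
    (θ : V → EuclideanSpace ℝ (Fin n) → ℝ)
    (hθconc : ∀ v, ConcaveOn ℝ Δ (θ v))
    (hθcont : ∀ v, ContinuousOn (θ v) Δ)
    (hθfin : {v : V | ∃ x ∈ Δ, θ v x ≠ 0}.Finite)
    (θtot : EuclideanSpace ℝ (Fin n) → ℝ)
    (hθtot : ∀ x, θtot x = ∑ᶠ v, nv v * θ v x)
    (xmax : EuclideanSpace ℝ (Fin n))
    (hxmax : xmax ∈ Δ ∧ ∀ y ∈ Δ, θtot y ≤ θtot xmax)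
    (hvert : (0 : EuclideanSpace ℝ (Fin n)) ∈
      Set.extremePoints ℝ (supDiff Δ θtot xmax)) :
    ∀ x, x ∈ Δ → (∀ y ∈ Δ, θtot y ≤ θtot x) →
      ((0 : EuclideanSpace ℝ (Fin n)) ∈ Set.extremePoints ℝ (supDiff Δ θtot x) ∧
      (∃! a : V → EuclideanSpace ℝ (Fin n),
        (Function.support a).Finite ∧ (∀ v, a v ∈ supDiff Δ (θ v) x) ∧
          ∑ᶠ v, nv v • a v = 0) ∧
      ∀ a : V → EuclideanSpace ℝ (Fin n),
        (Function.support a).Finite → (∀ v, a v ∈ supDiff Δ (θ v) x) →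
        ∑ᶠ v, nv v • a v = 0 →
        ∀ v, a v ∈ Set.extremePoints ℝ (supDiff Δ (θ v) x)) :=
  stmt17_general Δ hΔint nv hnv θ hθconc hθcont hθfin θtot hθtot xmax hxmax hvert
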